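/- arXiv:2209.13147 — 3 statements merged into one kernel-verified Lean document; each statement's English description precedes it below -/
import Mathlib

section
/- Let A be an n×n matrix with entries in {0,1}, n ≥ 2. If the permanent of A is nonzero and every column of A contains exactly two entries equal to 1, then the permanent of A is at least 2. -/
/-!
A binary matrix has permanent equal to the number of permutations supported on its ones.
Fix one such permutation `σ`. Every column `j` has a second one, in a row `g j ≠ σ⁻¹ j`, so the
map `j ↦ σ (g j)` on columns has no fixed point. On its (nonempty) set of periodic points it is a
bijection; rerouting `σ` along it gives a second permutation supported on the ones.
-/

def pm {n : ℕ} (A : Matrix (Fin n) (Fin n) ℕ) : ℕ :=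
  ∑ σ : Equiv.Perm (Fin n), ∏ i, A i (σ i)

open Function Finset

theorem Function.nonempty_periodicPts {α : Type*} [Finite α] [Nonempty α] (f : α → α) :
    (periodicPts f).Nonempty := by
  obtain ⟨x⟩ := ‹Nonempty α›
  obtain ⟨m, n, hmn, heq⟩ : ∃ m n, m < n ∧ f^[m] x = f^[n] x := by
    obtain ⟨m, n, hne, heq⟩ := Finite.exists_ne_map_eq_of_infinite (f^[·] x)
    rcases hne.lt_or_gt with h | h
    exacts [⟨m, n, h, heq⟩, ⟨n, m, h, heq.symm⟩]
  refine ⟨f^[m] x, mk_mem_periodicPts (Nat.sub_pos_of_lt hmn) ?_⟩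
  rw [IsPeriodicPt, IsFixedPt, ← iterate_add_apply, Nat.sub_add_cancel hmn.le, heq]

theorem Function.exists_perm_ne_one_forall_eq_or_eq {α : Type*} [Finite α] [Nonempty α]
    {f : α → α} (hf : ∀ x, f x ≠ x) : ∃ π : Equiv.Perm α, π ≠ 1 ∧ ∀ x, π x = x ∨ π x = f x := by
  classical
  let π := Equiv.Perm.ofSubtype ((bijOn_periodicPts f).equiv f)
  have hπ : ∀ x ∈ periodicPts f, π x = f x := fun x hx => Equiv.Perm.ofSubtype_apply_of_mem _ hx
  obtain ⟨x, hx⟩ := nonempty_periodicPts f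
  refine ⟨π, fun h => hf x ?_, fun y => ?_⟩
  · rw [← hπ x hx, h, Equiv.Perm.one_apply]
  · by_cases hy : y ∈ periodicPts f
    · exact .inr (hπ y hy)
    · exact .inl (Equiv.Perm.ofSubtype_apply_of_not_mem _ hy)

theorem Equiv.exists_ne_of_forall_exists_ne_symm {ι κ : Type*} [Finite κ] [Nonempty κ]
    {R : ι → κ → Prop} (σ : ι ≃ κ) (hσ : ∀ i, R i (σ i))
    (hcol : ∀ j, ∃ i, i ≠ σ.symm j ∧ R i j) : ∃ τ : ι ≃ κ, τ ≠ σ ∧ ∀ i, R i (τ i) := by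
  choose g hgσ hgR using hcol
  obtain ⟨π, hπ1, hπ⟩ := exists_perm_ne_one_forall_eq_or_eq (f := fun j => σ (g j))
    fun j h => hgσ j (σ.symm_apply_eq.mpr h.symm).symm
  refine ⟨σ.trans π.symm, fun h => hπ1 ?_, fun i => ?_⟩
  · rw [← inv_eq_one, Equiv.Perm.inv_def]
    ext j
    simpa using congrArg (· (σ.symm j)) h
  · have hj : π (π.symm (σ i)) = σ i := π.apply_symm_apply _
    rw [trans_apply]
    generalize π.symm (σ i) = j at hj ⊢
    rcases hπ j with h | h
    · rw [h.symm.trans hj]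
      exact hσ i
    · rw [← σ.injective (h.symm.trans hj)]
      exact hgR j

theorem pm_eq_card_filter {n : ℕ} {A : Matrix (Fin n) (Fin n) ℕ}
    (hA : ∀ i j, A i j = 0 ∨ A i j = 1) :
    pm A = #{σ : Equiv.Perm (Fin n) | ∀ i, A i (σ i) = 1} := by
  rw [card_filter]
  refine sum_congr rfl fun σ _ => ?_
  split_ifs with h
  · simp [h]
  · obtain ⟨i, hi⟩ := not_forall.mp h
    exact prod_eq_zero (mem_univ i) ((hA i (σ i)).resolve_right hi)

/-- A binary n×n matrix (n ≥ 2) with nonzero permanent in which every column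
contains exactly two entries equal to 1 has permanent at least 2. -/
theorem stmt0 (n : ℕ) (hn : 2 ≤ n) (A : Matrix (Fin n) (Fin n) ℕ)
    (hbin : ∀ i j, A i j = 0 ∨ A i j = 1)
    (hperm : pm A ≠ 0)
    (hcol : ∀ j, (Finset.univ.filter (fun i => A i j = 1)).card = 2) :
    2 ≤ pm A := by
  have : Nonempty (Fin n) := ⟨⟨0, by omega⟩⟩
  rw [pm_eq_card_filter hbin] at hperm ⊢
  obtain ⟨σ, hσ⟩ := card_ne_zero.mp hperm
  have hσA : ∀ i, A i (σ i) = 1 := (mem_filter.mp hσ).2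
  have hsecond : ∀ j, ∃ i, i ≠ σ.symm j ∧ A i j = 1 := fun j => by
    obtain ⟨i, hi, hne⟩ := exists_mem_ne (by rw [hcol j]; norm_num) (σ.symm j)
    exact ⟨i, hne, (mem_filter.mp hi).2⟩
  obtain ⟨τ, hτσ, hτA⟩ := σ.exists_ne_of_forall_exists_ne_symm hσA hsecond
  exact one_lt_card.mpr ⟨τ, by simpa using hτA, σ, hσ, hτσ⟩
end

section
/- Combining the adversary lemma and the permanent bound: in the game of guessing a secret permutation of {1,…,n} (n ≥ 2) with per-position ✓/✗ feedback, after the greedy adversary answers n−2 rounds, the set of consistent permutations has cardinality at least 2. Hence no codebreaker strategy solves the game in n−1 rounds, and the optimal number of rounds G(n) equals exactly n for n ≥ 2 (upper bound from guessing constant strings). -/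
/-!
The greedy adversary answers ✗ at a position whenever some permutation consistent with everything
so far survives that answer, so a ✓ is forced only when ✗ would leave nothing consistent. Hence the
permutations consistent with its answers are exactly those avoiding the ✗-entries of the tracking
matrix. Each guess adds at most one ✗ to each row, so after `n - 2` rounds every row keeps at least
two admissible values. Starting from a consistent permutation `σ` and choosing at every position
another admissible value gives a fixed-point-free map of the positions; rerouting `σ` along its
periodic points yields a second admissible, hence consistent, permutation.

A guess that hits the secret before the last round is answered all ✓ and leaves one candidate, so
no strategy wins within `n - 1` rounds. Guessing the constant strings `0, …, n - 2` and reading off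
the first ✓ of every position wins in `n`.
-/

attribute [local instance] Classical.propDecidable

namespace PG

variable {n : ℕ}

/-- Per-position exact-match feedback: `true` (✓) at `i` iff `x i = y i`. -/
def tau (x y : Fin n → Fin n) (i : Fin n) : Bool := decide (x i = y i)

/-- A codebreaker strategy in the permutation game. -/
def PStrategy (n : ℕ) : Type :=
  List (Fin n → Bool) → (Fin n → Fin n)

/-- Feedback history after `r` rounds against secret `y`. -/
def phist (S : PStrategy n) (y : Fin n → Fin n) : ℕ → List (Fin n → Bool)
  | 0 => []
  | r + 1 => phist S y r ++ [tau (S (phist S y r)) y]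

/-- The guess in round `r` (0-indexed). -/
def pguess (S : PStrategy n) (y : Fin n → Fin n) (r : ℕ) : Fin n → Fin n :=
  S (phist S y r)

/-- `S` wins within `m` rounds: for every secret permutation, some guess among
the first `m` equals the secret. -/
def PWinsIn (S : PStrategy n) (m : ℕ) : Prop :=
  ∀ y : Equiv.Perm (Fin n), ∃ r < m, pguess S (⇑y) r = ⇑y

/-- `Gnum n`: the optimal worst-case number of rounds needed to guess a secret
permutation of `{1,…,n}` with per-position ✓/✗ feedback. -/
noncomputable def Gnum (n : ℕ) : ℕ :=
  sInf {m | ∃ S : PStrategy n, PWinsIn S m}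

/-- A history of (guess, feedback) pairs. -/
abbrev Hist (n : ℕ) := List ((Fin n → Fin n) × (Fin n → Bool))

/-- A permutation is consistent with a history iff it satisfies every asserted
equality (✓) and inequality (✗). -/
def Consistent (H : Hist n) (σ : Equiv.Perm (Fin n)) : Prop :=
  ∀ p ∈ H, ∀ i : Fin n, if p.2 i then p.1 i = σ i else p.1 i ≠ σ i

/-- A permutation satisfies a partial feedback list `g` (on the first
`g.length` positions) for guess `x`. -/
def PrefixOK (x : Fin n → Fin n) (g : List Bool) (σ : Equiv.Perm (Fin n)) : Prop :=
  ∀ (j : ℕ) (hg : j < g.length) (hn : j < n),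
    if g.get ⟨j, hg⟩ then x ⟨j, hn⟩ = σ ⟨j, hn⟩ else x ⟨j, hn⟩ ≠ σ ⟨j, hn⟩

/-- Greedy adversary feedback on the first `j` positions: scanning left to
right, answer ✗ whenever some permutation consistent with the history and the
partial feedback so far remains, otherwise ✓. -/
noncomputable def greedyAux (H : Hist n) (x : Fin n → Fin n) : ℕ → List Bool
  | 0 => []
  | j + 1 =>
    greedyAux H x j ++
      [if ∃ σ : Equiv.Perm (Fin n),
          Consistent H σ ∧ PrefixOK x (greedyAux H x j ++ [false]) σ
        then false else true]

/-- The full greedy feedback vector for guess `x` given history `H`. -/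
noncomputable def gfb (H : Hist n) (x : Fin n → Fin n) (i : Fin n) : Bool :=
  (greedyAux H x n).getD i.val true

/-- The history after `r` rounds when the guesses are `xs 0, xs 1, …` and the
codemaker answers greedily. -/
noncomputable def greedyHist (xs : ℕ → Fin n → Fin n) : ℕ → Hist n
  | 0 => []
  | r + 1 => greedyHist xs r ++ [(xs r, gfb (greedyHist xs r) (xs r))]

/-- The 0/1 tracking matrix of a history: entry `(i, j)` is `0` iff some guess
placed value `j` at position `i` and received answer ✗. -/
noncomputable def track (H : Hist n) : Matrix (Fin n) (Fin n) ℕ :=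
  fun i j => if ∃ p ∈ H, p.1 i = j ∧ p.2 i = false then 0 else 1

end PG

namespace Function

variable {α : Type*} [Finite α] [Nonempty α]

theorem periodicPts_nonempty (f : α → α) : (periodicPts f).Nonempty := by
  let a := Classical.arbitrary α
  obtain ⟨k, l, hkl, heq⟩ := Finite.exists_ne_map_eq_of_infinite (fun m : ℕ => f^[m] a)
  wlog hlt : k < l generalizing k l
  · exact this l k hkl.symm heq.symm (by omega)
  refine ⟨f^[k] a, mk_mem_periodicPts (n := l - k) (by omega) ?_⟩
  rw [IsPeriodicPt, IsFixedPt, ← iterate_add_apply, Nat.sub_add_cancel hlt.le]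
  exact heq.symm

theorem exists_perm_ne_one_of_forall_ne {f : α → α} (hf : ∀ x, f x ≠ x) :
    ∃ c : Equiv.Perm α, c ≠ 1 ∧ ∀ x, c x = x ∨ c x = f x := by
  classical
  let c : Equiv.Perm α := Equiv.Perm.ofSubtype ((bijOn_periodicPts f).equiv f)
  have hc : ∀ x, c x = if x ∈ periodicPts f then f x else x := by
    intro x
    split_ifs with hx
    · exact Equiv.Perm.ofSubtype_apply_of_mem _ hx
    · exact Equiv.Perm.ofSubtype_apply_of_not_mem _ hx
  obtain ⟨p, hp⟩ := periodicPts_nonempty f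
  refine ⟨c, fun h1 => hf p ?_, fun x => ?_⟩
  · simpa [hc, hp] using congrArg (· p) h1
  · rw [hc]; split_ifs <;> simp

end Function

theorem Equiv.exists_ne_of_forall_exists_ne {α β : Type*} [Finite α] [Nonempty α]
    {R : α → β → Prop} (σ : α ≃ β) (hσ : ∀ i, R i (σ i)) (h : ∀ i, ∃ j ≠ σ i, R i j) :
    ∃ τ : α ≃ β, τ ≠ σ ∧ ∀ i, R i (τ i) := by
  choose g hgσ hg using h
  obtain ⟨c, hc1, hc⟩ := Function.exists_perm_ne_one_of_forall_ne
    (f := fun i => σ.symm (g i)) fun i hi => hgσ i (by simpa using congrArg σ hi)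
  refine ⟨c.trans σ, fun h => hc1 (Equiv.ext fun i => σ.injective (congrArg (· i) h)), fun i => ?_⟩
  rcases hc i with h | h <;> simp [h, hσ, hg]

namespace PG

variable {n : ℕ}

lemma ite_iff_eq_tau (x : Fin n → Fin n) (b : Bool) (σ : Equiv.Perm (Fin n)) (i : Fin n) :
    (if b then x i = σ i else x i ≠ σ i) ↔ b = tau x σ i := by
  cases b <;> simp [tau]

lemma tau_eq_true_iff (x y : Fin n → Fin n) (i : Fin n) : tau x y i = true ↔ x i = y i := by
  simp [tau]

lemma eq_of_tau_eq_tau_self {y z : Fin n → Fin n} (h : tau y y = tau y z) : y = z :=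
  funext fun i => (tau_eq_true_iff y z i).1 (h ▸ (tau_eq_true_iff y y i).2 rfl)

lemma consistent_iff (H : Hist n) (σ : Equiv.Perm (Fin n)) :
    Consistent H σ ↔ ∀ p ∈ H, p.2 = tau p.1 σ := by
  simp only [Consistent, ite_iff_eq_tau, funext_iff]

lemma consistent_append_iff (H : Hist n) (p : (Fin n → Fin n) × (Fin n → Bool))
    (σ : Equiv.Perm (Fin n)) :
    Consistent (H ++ [p]) σ ↔ Consistent H σ ∧ p.2 = tau p.1 σ := by
  simp only [consistent_iff, List.forall_mem_append, List.forall_mem_singleton]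

lemma prefixOK_append_iff (x : Fin n → Fin n) (l : List Bool) (b : Bool)
    (σ : Equiv.Perm (Fin n)) :
    PrefixOK x (l ++ [b]) σ ↔
      PrefixOK x l σ ∧ ∀ hl : l.length < n, b = tau x σ ⟨l.length, hl⟩ := by
  simp only [PrefixOK, ite_iff_eq_tau, List.get_eq_getElem, List.length_append,
    List.length_singleton]
  constructor
  · intro h
    refine ⟨fun j hj hn => ?_, fun hl => ?_⟩
    · simpa [List.getElem_append_left hj] using h j (by omega) hn
    · simpa using h l.length (by omega) hl
  · rintro ⟨h, hb⟩ j hj hn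
    rcases Nat.lt_or_ge j l.length with hj' | hj'
    · simpa [List.getElem_append_left hj'] using h j hj' hn
    · obtain rfl : j = l.length := by omega
      simpa using hb hn

section Greedy

variable (H : Hist n) (x : Fin n → Fin n)

lemma greedyAux_length (j : ℕ) : (greedyAux H x j).length = j := by
  induction j with
  | zero => rfl
  | succ j ih => simp [greedyAux, ih]

lemma greedyAux_prefix {j k : ℕ} (h : j ≤ k) : greedyAux H x j <+: greedyAux H x k := by
  induction k, h using Nat.le_induction with
  | base => exact List.prefix_refl _
  | succ k _ ih => exact ih.trans (by rw [greedyAux]; exact List.prefix_append _ _)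

lemma getElem_greedyAux {i j : ℕ} (hi : i < n) (hij : i < j) :
    (greedyAux H x j)[i]'(by rw [greedyAux_length]; exact hij) = gfb H x ⟨i, hi⟩ := by
  rw [gfb, List.getD_eq_getElem _ _ (by rw [greedyAux_length]; exact hi),
    ← (greedyAux_prefix H x (Nat.succ_le_of_lt hij)).getElem,
    ← (greedyAux_prefix H x (Nat.succ_le_of_lt hi)).getElem]
  simp [greedyAux_length]

lemma prefixOK_greedyAux_iff (j : ℕ) (σ : Equiv.Perm (Fin n)) :
    PrefixOK x (greedyAux H x j) σ ↔ ∀ i : Fin n, (i : ℕ) < j → gfb H x i = tau x σ i := by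
  simp only [PrefixOK, ite_iff_eq_tau, List.get_eq_getElem, greedyAux_length]
  refine ⟨fun h i hi => ?_, fun h i hij hi => ?_⟩
  · simpa [getElem_greedyAux H x i.isLt hi] using h i hi i.isLt
  · simpa [getElem_greedyAux H x hi hij] using h ⟨i, hi⟩ hij

lemma gfb_eq_false_iff (k : Fin n) :
    gfb H x k = false ↔ ∃ σ : Equiv.Perm (Fin n), Consistent H σ ∧
      (∀ i < k, gfb H x i = tau x σ i) ∧ x k ≠ σ k := by
  rw [← getElem_greedyAux H x k.isLt (Nat.lt_succ_self k)]
  simp only [greedyAux, List.getElem_concat_length (greedyAux_length H x k).symm,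
    prefixOK_append_iff, prefixOK_greedyAux_iff, greedyAux_length, Fin.lt_def]
  split_ifs with hP <;> simpa [tau] using hP

lemma exists_consistent_gfb_eq_tau (h : ∃ σ, Consistent H σ) :
    ∃ σ, Consistent H σ ∧ gfb H x = tau x σ := by
  suffices ∀ j : ℕ, ∃ σ, Consistent H σ ∧ ∀ i : Fin n, (i : ℕ) < j → gfb H x i = tau x σ i by
    obtain ⟨σ, hσ, hagree⟩ := this n
    exact ⟨σ, hσ, funext fun i => hagree i i.isLt⟩
  intro j
  induction j with
  | zero => exact h.imp fun σ hσ => ⟨hσ, fun i hi => absurd hi (Nat.not_lt_zero _)⟩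
  | succ j ih =>
    obtain ⟨σ, hσ, hagree⟩ := ih
    by_cases hj : j < n
    swap
    · exact ⟨σ, hσ, fun i hi => hagree i (by omega)⟩
    let k : Fin n := ⟨j, hj⟩
    cases hk : gfb H x k
    · obtain ⟨τ, hτ, hτagree, hτk⟩ := (gfb_eq_false_iff H x k).1 hk
      refine ⟨τ, hτ, fun i hi => ?_⟩
      rcases Nat.lt_succ_iff_lt_or_eq.1 hi with hi | hi
      · exact hτagree i hi
      · obtain rfl : i = k := Fin.ext hi
        simpa [hk, tau] using hτk
    · refine ⟨σ, hσ, fun i hi => ?_⟩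
      rcases Nat.lt_succ_iff_lt_or_eq.1 hi with hi | hi
      · exact hagree i hi
      · obtain rfl : i = k := Fin.ext hi
        rw [hk, eq_comm, tau_eq_true_iff]
        by_contra hne
        simpa [hk] using (gfb_eq_false_iff H x _).2 ⟨σ, hσ, fun i' hi' => hagree i' hi', hne⟩

/-- A ✓ is given only when ✗ would leave nothing consistent. -/
lemma gfb_eq_tau_of_consistent {σ : Equiv.Perm (Fin n)} (hσ : Consistent H σ)
    (hx : ∀ i, x i = σ i → gfb H x i = true) : gfb H x = tau x σ := by
  funext k
  induction k using WellFoundedLT.induction with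
  | _ k ih =>
    by_cases hk : x k = σ k
    · rw [hx k hk, (tau_eq_true_iff x σ k).2 hk]
    · rw [(gfb_eq_false_iff H x k).2 ⟨σ, hσ, ih, hk⟩]
      simpa [tau] using hk

end Greedy

lemma track_eq_one_iff (H : Hist n) (i j : Fin n) :
    track H i j = 1 ↔ ∀ p ∈ H, p.1 i = j → p.2 i = true := by
  simp [track]

lemma Consistent.track_eq_one {H : Hist n} {σ : Equiv.Perm (Fin n)} (hσ : Consistent H σ)
    (i : Fin n) : track H i (σ i) = 1 := by
  rw [track_eq_one_iff]
  intro p hp hpi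
  rw [(consistent_iff H σ).1 hσ p hp, tau_eq_true_iff, hpi]

lemma card_track_ne_one_le (H : Hist n) (i : Fin n) :
    (Finset.univ.filter fun j => track H i j ≠ 1).card ≤ H.length := by
  calc _ ≤ (H.map fun p => p.1 i).toFinset.card := Finset.card_le_card fun j hj => ?_
    _ ≤ (H.map fun p => p.1 i).length := List.toFinset_card_le _
    _ = H.length := List.length_map _
  simp only [Finset.mem_filter, Finset.mem_univ, true_and, ne_eq, track_eq_one_iff,
    not_forall] at hj
  obtain ⟨p, hp, hpi, -⟩ := hj
  exact List.mem_toFinset.2 (List.mem_map.2 ⟨p, hp, hpi⟩)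

lemma two_le_card_track_eq_one {H : Hist n} (hH : H.length + 2 ≤ n) (i : Fin n) :
    2 ≤ (Finset.univ.filter fun j => track H i j = 1).card := by
  have hsum := Finset.card_filter_add_card_filter_not (s := Finset.univ) (fun j => track H i j = 1)
  rw [Finset.card_univ, Fintype.card_fin] at hsum
  have hne := card_track_ne_one_le H i
  simp only [ne_eq] at hne
  omega

section GreedyHist

variable (xs : ℕ → Fin n → Fin n)

lemma greedyHist_length (r : ℕ) : (greedyHist xs r).length = r := by
  induction r with
  | zero => rfl
  | succ r ih => simp [greedyHist, ih]

lemma consistent_greedyHist_succ_iff (r : ℕ) (σ : Equiv.Perm (Fin n)) :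
    Consistent (greedyHist xs (r + 1)) σ ↔
      Consistent (greedyHist xs r) σ ∧ gfb (greedyHist xs r) (xs r) = tau (xs r) σ :=
  consistent_append_iff _ _ _

lemma exists_consistent_greedyHist (r : ℕ) :
    ∃ σ : Equiv.Perm (Fin n), Consistent (greedyHist xs r) σ := by
  induction r with
  | zero => exact ⟨1, fun p hp => by simp [greedyHist] at hp⟩
  | succ r ih =>
    obtain ⟨σ, hσ, hgfb⟩ := exists_consistent_gfb_eq_tau _ (xs r) ih
    exact ⟨σ, (consistent_greedyHist_succ_iff xs r σ).2 ⟨hσ, hgfb⟩⟩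

lemma consistent_greedyHist_iff_track (r : ℕ) (σ : Equiv.Perm (Fin n)) :
    Consistent (greedyHist xs r) σ ↔ ∀ i, track (greedyHist xs r) i (σ i) = 1 := by
  refine ⟨Consistent.track_eq_one, fun h => ?_⟩
  induction r with
  | zero => intro p hp; simp [greedyHist] at hp
  | succ r ih =>
    simp only [greedyHist, track_eq_one_iff, List.forall_mem_append,
      List.forall_mem_singleton] at h
    have hσ := ih fun i => (track_eq_one_iff _ _ _).2 (h i).1
    exact (consistent_greedyHist_succ_iff xs r σ).2
      ⟨hσ, gfb_eq_tau_of_consistent _ _ hσ fun i => (h i).2⟩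

theorem two_le_card_consistent_greedyHist (hn : 2 ≤ n) :
    2 ≤ (Finset.univ.filter fun σ => Consistent (greedyHist xs (n - 2)) σ).card := by
  have : Nonempty (Fin n) := ⟨⟨0, by omega⟩⟩
  obtain ⟨σ, hσ⟩ := exists_consistent_greedyHist xs (n - 2)
  obtain ⟨τ, hτσ, hτ⟩ := Equiv.exists_ne_of_forall_exists_ne
    (R := fun i j => track (greedyHist xs (n - 2)) i j = 1) σ hσ.track_eq_one fun i => by
      obtain ⟨j, hj, hjσ⟩ := Finset.exists_mem_ne
        (two_le_card_track_eq_one (H := greedyHist xs (n - 2))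
          (by rw [greedyHist_length]; omega) i) (σ i)
      exact ⟨j, hjσ, (Finset.mem_filter.1 hj).2⟩
  refine Finset.one_lt_card.2 ⟨τ, ?_, σ, ?_, hτσ⟩ <;> simp only [Finset.mem_filter,
    Finset.mem_univ, true_and, consistent_greedyHist_iff_track]
  exacts [hτ, hσ.track_eq_one]

end GreedyHist

lemma Consistent.of_greedyHist_le {xs : ℕ → Fin n → Fin n} {r m : ℕ} (h : r ≤ m)
    {σ : Equiv.Perm (Fin n)} (hσ : Consistent (greedyHist xs m) σ) :
    Consistent (greedyHist xs r) σ := by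
  induction m, h using Nat.le_induction with
  | base => exact hσ
  | succ m _ ih => exact ih ((consistent_greedyHist_succ_iff xs m σ).1 hσ).1

lemma PWinsIn.mono {S : PStrategy n} {m m' : ℕ} (h : m ≤ m') (hS : PWinsIn S m) :
    PWinsIn S m' :=
  fun y => (hS y).imp fun _ ⟨hr, hy⟩ => ⟨hr.trans_le h, hy⟩

section LowerBound

variable {S : PStrategy n} {xs : ℕ → Fin n → Fin n}
  (hxs : ∀ r, S ((greedyHist xs r).map Prod.snd) = xs r)
include hxs

lemma phist_eq_of_consistent {ρ : Equiv.Perm (Fin n)} {r : ℕ}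
    (hρ : Consistent (greedyHist xs r) ρ) : phist S ρ r = (greedyHist xs r).map Prod.snd := by
  induction r with
  | zero => rfl
  | succ r ih =>
    obtain ⟨hρ, hgfb⟩ := (consistent_greedyHist_succ_iff xs r ρ).1 hρ
    simp [phist, greedyHist, ih hρ, hxs, hgfb]

lemma pguess_eq_of_consistent {ρ : Equiv.Perm (Fin n)} {r m : ℕ} (hr : r ≤ m)
    (hρ : Consistent (greedyHist xs m) ρ) : pguess S ρ r = xs r := by
  rw [pguess, phist_eq_of_consistent hxs (hρ.of_greedyHist_le hr), hxs]

/-- A guess that hits the secret before round `m` is answered all ✓, which pins the secret down. -/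
lemma eq_of_pguess_eq_of_consistent {m : ℕ} {σ τ : Equiv.Perm (Fin n)}
    (hσ : Consistent (greedyHist xs m) σ) (hτ : Consistent (greedyHist xs m) τ)
    {r r' : ℕ} (hr : r ≤ m) (hr' : r' ≤ m)
    (hσr : pguess S σ r = σ) (hτr : pguess S τ r' = τ) : σ = τ := by
  rw [pguess_eq_of_consistent hxs hr hσ] at hσr
  rw [pguess_eq_of_consistent hxs hr' hτ] at hτr
  wlog hle : r ≤ r' generalizing σ τ r r'
  · exact (this hτ hσ hr' hr hτr hσr (by omega)).symm
  rcases hle.lt_or_eq with hlt | rfl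
  · have hσ' := ((consistent_greedyHist_succ_iff xs r σ).1 (hσ.of_greedyHist_le (by omega))).2
    have hτ' := ((consistent_greedyHist_succ_iff xs r τ).1 (hτ.of_greedyHist_le (by omega))).2
    rw [hσr] at hσ' hτ'
    exact DFunLike.coe_injective (eq_of_tau_eq_tau_self (hσ'.symm.trans hτ'))
  · exact DFunLike.coe_injective (hσr.symm.trans hτr)

end LowerBound

noncomputable def adversaryHist (S : PStrategy n) : ℕ → Hist n
  | 0 => []
  | r + 1 =>
    let x := S ((adversaryHist S r).map Prod.snd)
    adversaryHist S r ++ [(x, gfb (adversaryHist S r) x)]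

lemma greedyHist_adversaryHist (S : PStrategy n) (r : ℕ) :
    greedyHist (fun r => S ((adversaryHist S r).map Prod.snd)) r = adversaryHist S r := by
  induction r with
  | zero => rfl
  | succ r ih => rw [greedyHist, adversaryHist, ih]

theorem not_pWinsIn_sub_one (hn : 2 ≤ n) (S : PStrategy n) : ¬PWinsIn S (n - 1) := by
  intro hS
  set xs := fun r => S ((adversaryHist S r).map Prod.snd)
  have hxs : ∀ r, S ((greedyHist xs r).map Prod.snd) = xs r := fun r => by
    rw [greedyHist_adversaryHist]
  obtain ⟨σ, hσ, τ, hτ, hne⟩ := Finset.one_lt_card.1 (two_le_card_consistent_greedyHist xs hn)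
  obtain ⟨r, hr, hσr⟩ := hS σ
  obtain ⟨r', hr', hτr⟩ := hS τ
  exact hne (eq_of_pguess_eq_of_consistent hxs (Finset.mem_filter.1 hσ).2
    (Finset.mem_filter.1 hτ).2 (by omega) (by omega) hσr hτr)

lemma phist_length (S : PStrategy n) (y : Fin n → Fin n) (r : ℕ) : (phist S y r).length = r := by
  induction r with
  | zero => rfl
  | succ r ih => simp [phist, ih]

/-- When position `i` never received ✓, `findIdx` returns `hist.length = n - 1`, which is then
its value. -/
def constantStrategy (n : ℕ) : PStrategy n := fun hist =>
  if h : hist.length + 1 < n then fun _ => ⟨hist.length, by omega⟩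
  else fun i => ⟨min (hist.findIdx (· i)) (n - 1), by have := i.isLt; omega⟩

lemma findIdx_phist_constantStrategy (y : Fin n → Fin n) {r : ℕ} (hr : r < n) (i : Fin n) :
    (phist (constantStrategy n) y r).findIdx (· i) = min (y i : ℕ) r := by
  induction r with
  | zero => simp [phist]
  | succ r ih =>
    have hguess : constantStrategy n (phist (constantStrategy n) y r) = fun _ => ⟨r, by omega⟩ := by
      simp [constantStrategy, phist_length, hr]
    simp only [phist, List.findIdx_append, ih (by omega), phist_length, List.findIdx_singleton,
      hguess, tau, decide_eq_true_eq, Fin.ext_iff]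
    split_ifs <;> omega

lemma pWinsIn_constantStrategy (hn : 0 < n) : PWinsIn (constantStrategy n) n := by
  refine fun y => ⟨n - 1, by omega, funext fun i => Fin.ext ?_⟩
  have hlast : ¬n - 1 + 1 < n := by omega
  have := (y i).isLt
  simp only [pguess, constantStrategy, phist_length, hlast, dite_false,
    findIdx_phist_constantStrategy _ (by omega : n - 1 < n)]
  omega

theorem gnum_eq (hn : 2 ≤ n) : Gnum n = n :=
  IsLeast.csInf_eq ⟨⟨constantStrategy n, pWinsIn_constantStrategy (by omega)⟩,
    fun _ ⟨S, hS⟩ => not_lt.1 fun hm => not_pWinsIn_sub_one hn S (hS.mono (by omega))⟩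

end PG

/-- For `n ≥ 2`, after the greedy adversary answers `n - 2` rounds at least two
consistent permutations remain; hence no strategy solves the permutation game
in `n - 1` rounds and the optimal number of rounds is exactly `n`. -/
theorem stmt12 (n : ℕ) (hn : 2 ≤ n) :
    (∀ xs : ℕ → Fin n → Fin n,
      2 ≤ (Finset.univ.filter
        (fun σ : Equiv.Perm (Fin n) =>
          PG.Consistent (PG.greedyHist xs (n - 2)) σ)).card) ∧
    PG.Gnum n = n :=
  ⟨fun xs => PG.two_le_card_consistent_greedyHist xs hn, PG.gnum_eq hn⟩
end

section
/- Auxiliary lemma: in the game of guessing a secret permutation of {1,…,n} with per-position ✓/✗ feedback, if the codebreaker additionally knows one forbidden pair (i,j) — i.e., that the value at position i is not j — then she can guarantee to find the secret within n − 1 rounds. -/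
attribute [local instance] Classical.propDecidable

/-! Rank the values by a permutation `e` so that the forbidden value `j` has rank `0`. In round
`t < n - 2` position `i` is probed with the value of rank `t + 1`, every other position with
rank `t`, or with rank `t + 1` once the value at `i` has been hit, so that this rank is skipped.
After these `n - 2` rounds each position has been probed with all values but two, one of which it
is known not to hold (`j` at `i`; the value at `i` elsewhere). Hence any two secrets with the same
feedback agree, first at `i` and then everywhere, and the secret is named in round `n - 2`. -/

theorem eq_of_forall_eq_iff_of_card_le {α : Type*} [Fintype α] [DecidableEq α] {A : Finset α}
    {v x x' : α} (hcard : Fintype.card α ≤ A.card + 2) (hvA : v ∉ A) (hx : x ≠ v) (hx' : x' ≠ v)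
    (hA : ∀ c ∈ A, x = c ↔ x' = c) : x = x' := by
  by_contra hne
  have hxA : x ∉ A := fun h => hne ((hA x h).1 rfl).symm
  have hx'A : x' ∉ A := fun h => hne ((hA x' h).2 rfl)
  have := (insert v (insert x (insert x' A))).card_le_univ
  rw [Finset.card_insert_of_notMem (by simp [hvA, hx.symm, hx'.symm]),
    Finset.card_insert_of_notMem (by simp [hxA, hne]), Finset.card_insert_of_notMem hx'A] at this
  omega

theorem strictMono_ite_succ {P : ℕ → Prop} [DecidablePred P] (hP : Monotone P) :
    StrictMono fun t => if P t then t + 1 else t := by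
  refine strictMono_nat_of_lt_succ fun t => ?_
  by_cases ht : P t
  · simp [ht, hP t.le_succ ht]
  · split_ifs <;> omega

namespace PG

variable {n : ℕ}

section Game

variable (S : PStrategy n) (y z : Fin n → Fin n)

theorem length_phist (r : ℕ) : (phist S y r).length = r := by
  induction r with
  | zero => rfl
  | succ r ih => simp [phist, ih]

theorem mem_phist_iff {r : ℕ} {f : Fin n → Bool} :
    f ∈ phist S y r ↔ ∃ s < r, tau (pguess S y s) y = f := by
  induction r with
  | zero => simp [phist]
  | succ r ih =>
    simp only [phist, List.mem_append, ih, List.mem_singleton, Nat.lt_succ_iff_lt_or_eq]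
    constructor
    · rintro (⟨s, hs, rfl⟩ | rfl)
      exacts [⟨s, .inl hs, rfl⟩, ⟨r, .inr rfl, rfl⟩]
    · rintro ⟨s, hs | rfl, rfl⟩
      exacts [.inl ⟨s, hs, rfl⟩, .inr rfl]

theorem phist_take {r m : ℕ} (h : r ≤ m) : (phist S y m).take r = phist S y r := by
  induction m with
  | zero => simp [Nat.le_zero.mp h, phist]
  | succ m ih =>
    rcases h.eq_or_lt with rfl | h
    · simp [List.take_of_length_le, length_phist]
    · rw [phist, List.take_append_of_le_length (by simp [length_phist]; omega),
        ih (by omega)]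

variable {S y z}

theorem pguess_eq_and_tau_eq_of_phist_eq {m t : ℕ} (h : phist S y m = phist S z m) (ht : t < m) :
    pguess S y t = pguess S z t ∧ tau (pguess S y t) y = tau (pguess S z t) z := by
  have hr : ∀ r ≤ m, phist S y r = phist S z r := fun r hr => by
    rw [← phist_take S y hr, ← phist_take S z hr, h]
  have hg : pguess S y t = pguess S z t := congrArg S (hr t ht.le)
  refine ⟨hg, ?_⟩
  have := hr (t + 1) ht
  simp only [phist, hr t ht.le, List.append_cancel_left_eq, List.cons.injEq, and_true] at this
  rw [hg]
  exact this

theorem phist_eq_of_agree {S' : PStrategy n} {m : ℕ}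
    (hS : ∀ L : List (Fin n → Bool), L.length < m → S' L = S L) {r : ℕ} (hr : r ≤ m) :
    phist S' y r = phist S y r := by
  induction r with
  | zero => rfl
  | succ r ih =>
    have ih := ih (by omega)
    rw [phist, phist, ih, hS _ (by rw [length_phist]; omega)]

end Game

theorem exists_pguess_eq_of_separates (S : PStrategy n) (P : Equiv.Perm (Fin n) → Prop) (m : ℕ)
    (hsep : ∀ y z, P y → P z → phist S y m = phist S z m → y = z) :
    ∃ S' : PStrategy n, ∀ y, P y → pguess S' (⇑y) m = ⇑y := by
  let S' : PStrategy n := fun L =>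
    if h : ∃ z, P z ∧ phist S (⇑z) m = L then ⇑h.choose else S L
  have hagree : ∀ L : List (Fin n → Bool), L.length < m → S' L = S L := by
    intro L hL
    refine dif_neg fun ⟨z, _, hz⟩ => ?_
    rw [← hz, length_phist] at hL
    exact lt_irrefl m hL
  refine ⟨S', fun y hy => ?_⟩
  have hex : ∃ z, P z ∧ phist S (⇑z) m = phist S (⇑y) m := ⟨y, hy, rfl⟩
  rw [pguess, phist_eq_of_agree hagree le_rfl]
  simp only [S', dif_pos hex]
  obtain ⟨hz, hzy⟩ := hex.choose_spec
  rw [hsep _ _ hz hy hzy]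

section Probe

open Fin.NatCast

theorem natCast_inj_of_lt [NeZero n] {a b : ℕ} (ha : a < n) (hb : b < n) :
    (a : Fin n) = b ↔ a = b := by
  rw [Fin.ext_iff, Fin.val_cast_of_lt ha, Fin.val_cast_of_lt hb]

variable [NeZero n] (i : Fin n) (e : Equiv.Perm (Fin n))

def Revealed (y : Fin n → Fin n) (t : ℕ) : Prop := ∃ s < t, e ((s + 1 : ℕ) : Fin n) = y i

def probe : PStrategy n := fun L p =>
  e (if p = i ∨ ∃ f ∈ L, f i = true then ((L.length + 1 : ℕ) : Fin n) else (L.length : Fin n))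

variable {i e}

theorem pguess_probe_self (y : Fin n → Fin n) (t : ℕ) :
    pguess (probe i e) y t i = e ((t + 1 : ℕ) : Fin n) := by
  simp only [pguess, probe, true_or, if_true, length_phist]

theorem pguess_probe (y : Fin n → Fin n) (t : ℕ) (p : Fin n) :
    pguess (probe i e) y t p =
      e (if p = i ∨ Revealed i e y t then ((t + 1 : ℕ) : Fin n) else (t : Fin n)) := by
  have hrev : (∃ f ∈ phist (probe i e) y t, f i = true) ↔ Revealed i e y t := by
    simp only [mem_phist_iff, Revealed]
    constructor
    · rintro ⟨_, ⟨s, hs, rfl⟩, hf⟩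
      refine ⟨s, hs, ?_⟩
      simpa [tau, pguess_probe_self] using hf
    · rintro ⟨s, hs, hsi⟩
      exact ⟨_, ⟨s, hs, rfl⟩, by simp only [tau, pguess_probe_self, hsi, decide_true]⟩
  simp only [pguess, probe, length_phist, hrev]

theorem revealed_mono (y : Fin n → Fin n) : Monotone (Revealed i e y) :=
  fun _ _ hab ⟨s, hs, h⟩ => ⟨s, hs.trans_le hab, h⟩

theorem card_image_pguess_probe (y : Fin n → Fin n) (p : Fin n) :
    ((Finset.range (n - 2)).image fun t => pguess (probe i e) y t p).card = n - 2 := by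
  have hrank : StrictMono fun t => if p = i ∨ Revealed i e y t then t + 1 else t :=
    strictMono_ite_succ fun _ _ hab => Or.imp_right (revealed_mono y hab)
  rw [Finset.card_image_of_injOn, Finset.card_range]
  intro a ha b hb hab
  simp only [Finset.coe_range, Set.mem_Iio] at ha hb
  simp only [pguess_probe, ← Nat.cast_ite, EmbeddingLike.apply_eq_iff_eq] at hab
  refine hrank.injective ((natCast_inj_of_lt ?_ ?_).1 hab) <;> split_ifs <;> omega

theorem pguess_probe_self_ne (y : Fin n → Fin n) {t : ℕ} (ht : t < n - 2) :
    pguess (probe i e) y t i ≠ e 0 := by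
  rw [pguess_probe_self, ne_eq, EmbeddingLike.apply_eq_iff_eq, ← Nat.cast_zero,
    natCast_inj_of_lt (by omega) (by omega)]
  omega

theorem pguess_probe_ne_of_ne {y : Fin n → Fin n} (hy : y i ≠ e 0) {p : Fin n} (hp : p ≠ i)
    {t : ℕ} (ht : t < n - 2) : pguess (probe i e) y t p ≠ y i := by
  intro h
  rw [pguess_probe] at h
  simp only [hp, false_or] at h
  split_ifs at h with hrev
  · obtain ⟨s, hs, hsi⟩ := hrev
    rw [← hsi, EmbeddingLike.apply_eq_iff_eq, natCast_inj_of_lt (by omega) (by omega)] at h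
    omega
  · cases t with
    | zero => exact hy (by rw [← h, Nat.cast_zero])
    | succ s => exact hrev ⟨s, s.lt_succ_self, h⟩

theorem probe_separates {y z : Equiv.Perm (Fin n)} (hy : y i ≠ e 0) (hz : z i ≠ e 0)
    (h : phist (probe i e) y (n - 2) = phist (probe i e) z (n - 2)) : y = z := by
  have hcard : ∀ p, Fintype.card (Fin n) ≤
      ((Finset.range (n - 2)).image fun t => pguess (probe i e) y t p).card + 2 := by
    intro p
    rw [card_image_pguess_probe, Fintype.card_fin]
    omega
  have hagree : ∀ p, ∀ c ∈ (Finset.range (n - 2)).image fun t => pguess (probe i e) y t p,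
      y p = c ↔ z p = c := by
    intro p c hc
    obtain ⟨t, ht, rfl⟩ := Finset.mem_image.1 hc
    obtain ⟨hg, hτ⟩ := pguess_eq_and_tau_eq_of_phist_eq h (Finset.mem_range.1 ht)
    have := congrFun hτ p
    rw [← hg] at this
    simpa only [tau, decide_eq_decide, eq_comm] using this
  have hi : y i = z i := by
    refine eq_of_forall_eq_iff_of_card_le (hcard i) ?_ hy hz (hagree i)
    simp only [Finset.mem_image, Finset.mem_range, not_exists, not_and]
    exact fun t ht => pguess_probe_self_ne y ht
  refine Equiv.ext fun p => ?_
  by_cases hp : p = i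
  · rw [hp, hi]
  refine eq_of_forall_eq_iff_of_card_le (hcard p) ?_ (y.injective.ne hp)
    (by rw [hi]; exact z.injective.ne hp) (hagree p)
  simp only [Finset.mem_image, Finset.mem_range, not_exists, not_and]
  exact fun t ht => pguess_probe_ne_of_ne hy hp ht

end Probe

end PG

/-- If the codebreaker knows in advance one forbidden pair `(i, j)` (the secret
permutation does not take value `j` at position `i`), then she can find the
secret within `n − 1` rounds. -/
theorem stmt16 (n : ℕ) (i j : Fin n) :
    ∃ S : PG.PStrategy n, ∀ y : Equiv.Perm (Fin n), y i ≠ j →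
      ∃ r < n - 1, PG.pguess S (⇑y) r = ⇑y := by
  have : NeZero n := NeZero.of_pos i.pos
  have hj : (Equiv.swap 0 j) 0 = j := Equiv.swap_apply_left 0 j
  obtain ⟨S, hS⟩ := PG.exists_pguess_eq_of_separates (PG.probe i (Equiv.swap 0 j))
    (fun y => y i ≠ j) (n - 2) fun y z hy hz =>
      PG.probe_separates (hj ▸ hy) (hj ▸ hz)
  refine ⟨S, fun y hy => ⟨n - 2, ?_, hS y hy⟩⟩
  have : 2 ≤ n := Fin.nontrivial_iff_two_le.1 ⟨⟨_, _, hy⟩⟩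
  omega
end
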